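/- (Abry–Dijkstra–van Mill) Let X be a nonempty separable metrizable topological space in which every connected component is open. Then X has a separable metrizable one-point connectification if and only if no connected component of X is compact; that is, there exist a connected separable metrizable space Y and a dense embedding of X into Y whose complement is a singleton, if and only if every connected component of X (as a subspace) is non-compact. -/

import Mathlib

open Filter Metric Set TopologicalSpace Topology
set_option linter.unusedSectionVars false

universe u

open Filter Metric Set TopologicalSpace Topology

theorem advm_exists_unbounded (M : Type*) [MetricSpace M] (h : ¬ CompactSpace M) :
    ∃ f : M → ℝ, Continuous f ∧ ∀ r : ℝ, ∃ x, r < f x := by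
  have hseq : ¬ IsSeqCompact (univ : Set M) := fun hs =>
    h (isCompact_univ_iff.mp hs.isCompact)
  rw [IsSeqCompact] at hseq
  push_neg at hseq
  obtain ⟨u, -, hu⟩ := hseq
  have hu' : ∀ (a : M) (φ : ℕ → ℕ), StrictMono φ → ¬ Tendsto (u ∘ φ) atTop (𝓝 a) := by
    intro a φ hφ hT
    exact hu a (mem_univ a) φ hφ hT
  -- no cluster points
  have main : ∀ y : M, ¬ ∀ k : ℕ, {n | dist (u n) y < 1 / (k + 1)}.Infinite := by
    intro y hy
    obtain ⟨φ, hφmono, hφ⟩ := Filter.extraction_forall_of_frequently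
      (fun k => Nat.frequently_atTop_iff_infinite.mpr (hy k))
    refine hu' y φ hφmono ?_
    rw [tendsto_iff_dist_tendsto_zero]
    exact squeeze_zero (fun n => dist_nonneg) (fun n => (hφ n).le)
      tendsto_one_div_add_atTop_nhds_zero_nat
  have fin : ∀ y : M, ∃ ε > 0, {n | u n ∈ ball y ε}.Finite := by
    intro y
    by_contra hc
    push_neg at hc
    refine main y fun k => ?_
    have hpos : (0 : ℝ) < 1 / (k + 1) := by positivity
    simpa [Metric.mem_ball] using hc (1 / (k + 1)) hpos
  have hSclosed : IsClosed (range u) := by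
    rw [← isOpen_compl_iff, isOpen_iff_mem_nhds]
    intro y hy
    obtain ⟨ε, hε, hfin⟩ := fin y
    refine mem_of_superset
      (((isOpen_ball).inter ((hfin.image u).isClosed.isOpen_compl)).mem_nhds
        ⟨mem_ball_self hε, fun hmem => ?_⟩) ?_
    · obtain ⟨n, _, hn⟩ := hmem
      exact hy ⟨n, hn⟩
    · rintro z ⟨hz1, hz2⟩ ⟨n, rfl⟩
      exact hz2 ⟨n, hz1, rfl⟩
  have hSdisc : ∀ m : ℕ, ∃ V : Set M, IsOpen V ∧ u m ∈ V ∧ ∀ n, u n ∈ V → u n = u m := by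
    intro m
    obtain ⟨ε, hε, hfin⟩ := fin (u m)
    refine ⟨ball (u m) ε ∩ ((u '' {n | u n ∈ ball (u m) ε}) \ {u m})ᶜ,
      (isOpen_ball).inter (((hfin.image u).diff (t := _)).isClosed.isOpen_compl), ⟨mem_ball_self hε, ?_⟩, ?_⟩
    · rintro ⟨-, hne⟩
      exact hne rfl
    · rintro n ⟨hn1, hn2⟩
      by_contra hne
      exact hn2 ⟨⟨n, hn1, rfl⟩, hne⟩
  haveI hdisc : DiscreteTopology (range u) := by
    rw [discreteTopology_iff_isOpen_singleton]
    rintro ⟨z, n, rfl⟩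
    obtain ⟨V, hVo, hVm, hV⟩ := hSdisc n
    have : ({⟨u n, n, rfl⟩} : Set (range u)) = Subtype.val ⁻¹' V := by
      ext ⟨w, k, rfl⟩
      simp only [mem_singleton_iff, mem_preimage, Subtype.ext_iff]
      exact ⟨fun h => h ▸ hVm, fun h => hV k h⟩
    rw [this]
    exact hVo.preimage continuous_subtype_val
  haveI hinf : Infinite (range u) := by
    rw [Set.infinite_coe_iff]
    intro hfin
    haveI := hfin.to_subtype
    obtain ⟨y, hy⟩ := Finite.exists_infinite_fiber (fun n => (⟨u n, n, rfl⟩ : range u))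
    have hfreq : ∃ᶠ n in atTop, u n = (y : M) := by
      rw [Nat.frequently_atTop_iff_infinite]
      have := Set.infinite_coe_iff.mp hy
      convert this using 1
      ext n
      simp [Subtype.ext_iff]
    obtain ⟨φ, hφmono, hφ⟩ := Filter.extraction_of_frequently_atTop hfreq
    refine hu' (y : M) φ hφmono ?_
    have : u ∘ φ = fun _ => (y : M) := funext fun k => hφ k
    rw [this]
    exact tendsto_const_nhds
  obtain ⟨j⟩ : Nonempty (ℕ ↪ range u) := ⟨Infinite.natEmbedding _⟩
  let f0 : C(range u, ℝ) := ⟨fun s => ((Function.invFun j s : ℕ) : ℝ),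
    continuous_of_discreteTopology⟩
  obtain ⟨g, hg⟩ := f0.exists_restrict_eq hSclosed
  refine ⟨g, g.continuous, fun r => ?_⟩
  obtain ⟨n, hn⟩ := exists_nat_gt r
  refine ⟨(j n : M), ?_⟩
  have h1 : g ((j n : M)) = f0 (j n) := by
    have h2 := DFunLike.congr_fun hg (j n)
    simpa using h2
  rw [h1]
  show r < ((Function.invFun j (j n) : ℕ) : ℝ)
  rw [Function.leftInverse_invFun j.injective n]
  exact hn



namespace ADvM

variable {X : Type u} [MetricSpace X]

/-- Weight function. -/
noncomputable def gg (F : X → ℝ) (x : X) : ℝ := 1 / (1 + F x)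

/-- Modified metric on `X`. -/
noncomputable def rr (F : X → ℝ) (x y : X) : ℝ := dist x y + |F x - F y|

open Classical in
/-- Distance on the one-point connectification. -/
noncomputable def DD (F : X → ℝ) : Option X → Option X → ℝ
  | none, none => 0
  | none, some y => gg F y
  | some x, none => gg F x
  | some x, some y =>
      if connectedComponent x = connectedComponent y then min (rr F x y) (gg F x + gg F y)
      else gg F x + gg F y

variable {F : X → ℝ}

theorem gg_pos (hF : ∀ x, 0 ≤ F x) (x : X) : 0 < gg F x := by
  have := hF x; unfold gg; positivity

theorem gg_lip (hF : ∀ x, 0 ≤ F x) (x y : X) : |gg F x - gg F y| ≤ |F x - F y| := by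
  have hx := hF x
  have hy := hF y
  have h1 : (0:ℝ) < 1 + F x := by linarith
  have h2 : (0:ℝ) < 1 + F y := by linarith
  have key : gg F x - gg F y = (F y - F x) / ((1 + F x) * (1 + F y)) := by
    unfold gg; field_simp; ring
  rw [key, abs_div]
  have h3 : (1:ℝ) ≤ |(1 + F x) * (1 + F y)| := by
    rw [abs_of_pos (by positivity)]
    nlinarith
  calc |F y - F x| / |(1 + F x) * (1 + F y)| ≤ |F y - F x| :=
        div_le_self (abs_nonneg _) h3
    _ = |F x - F y| := abs_sub_comm _ _

theorem rr_self (x : X) : rr F x x = 0 := by simp [rr]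

theorem rr_comm (x y : X) : rr F x y = rr F y x := by
  simp [rr, dist_comm, abs_sub_comm]

theorem rr_nonneg (x y : X) : 0 ≤ rr F x y := add_nonneg dist_nonneg (abs_nonneg _)

theorem dist_le_rr (x y : X) : dist x y ≤ rr F x y := le_add_of_nonneg_right (abs_nonneg _)

theorem rr_triangle (x y z : X) : rr F x z ≤ rr F x y + rr F y z := by
  have h1 := dist_triangle x y z
  have h2 := abs_sub_le (F x) (F y) (F z)
  unfold rr; linarith

theorem gg_lip_rr (hF : ∀ x, 0 ≤ F x) (x y : X) : |gg F x - gg F y| ≤ rr F x y :=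
  (gg_lip hF x y).trans (le_add_of_nonneg_left dist_nonneg)


@[simp] theorem DD_none_none : DD F none (none : Option X) = 0 := rfl
@[simp] theorem DD_none_some (y : X) : DD F none (some y) = gg F y := rfl
@[simp] theorem DD_some_none (x : X) : DD F (some x) none = gg F x := rfl

open Classical in
theorem DD_some_some (x y : X) : DD F (some x) (some y) =
    if connectedComponent x = connectedComponent y then min (rr F x y) (gg F x + gg F y)
    else gg F x + gg F y := rfl

theorem DD_le_add (hF : ∀ x, 0 ≤ F x) (x y : X) :
    DD F (some x) (some y) ≤ gg F x + gg F y := by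
  rw [DD_some_some]
  split_ifs
  · exact min_le_right _ _
  · exact le_rfl

theorem DD_lip (hF : ∀ x, 0 ≤ F x) (x y : X) :
    |gg F x - gg F y| ≤ DD F (some x) (some y) := by
  have h1 : |gg F x - gg F y| ≤ gg F x + gg F y := by
    have hx := (gg_pos hF x).le
    have hy := (gg_pos hF y).le
    rw [abs_sub_le_iff]; constructor <;> linarith
  rw [DD_some_some]
  split_ifs
  · exact le_min (gg_lip_rr hF x y) h1
  · exact h1

theorem DD_self (hF : ∀ x, 0 ≤ F x) (p : Option X) : DD F p p = 0 := by
  cases p with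
  | none => rfl
  | some x =>
    rw [DD_some_some, if_pos rfl, rr_self]
    exact min_eq_left (by have := (gg_pos hF x).le; linarith) |>.trans rfl

theorem DD_comm (p q : Option X) : DD F p q = DD F q p := by
  cases p <;> cases q <;> try rfl
  rename_i x y
  rw [DD_some_some, DD_some_some, rr_comm, add_comm (gg F x)]
  by_cases h : connectedComponent x = connectedComponent y
  · rw [if_pos h, if_pos h.symm]
  · rw [if_neg h, if_neg (fun h' => h h'.symm)]

theorem DD_nonneg (hF : ∀ x, 0 ≤ F x) (p q : Option X) : 0 ≤ DD F p q := by
  cases p <;> cases q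
  · exact le_rfl
  · exact (gg_pos hF _).le
  · exact (gg_pos hF _).le
  · rename_i x y
    rw [DD_some_some]
    have := rr_nonneg (F := F) x y
    have := (gg_pos hF x).le
    have := (gg_pos hF y).le
    split_ifs
    · exact le_min ‹0 ≤ rr F x y› (by linarith)
    · linarith

theorem DD_eq_zero (hF : ∀ x, 0 ≤ F x) {p q : Option X} (h : DD F p q = 0) : p = q := by
  cases p <;> cases q
  · rfl
  · exact absurd h (by simpa using (ne_of_gt (gg_pos hF _)))
  · exact absurd h (by simpa using (ne_of_gt (gg_pos hF _)))
  · rename_i x y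
    have hgx := gg_pos hF x
    have hgy := gg_pos hF y
    rw [DD_some_some] at h
    split_ifs at h with hc
    · rcases min_eq_iff.mp h with h' | h'
      · have : dist x y = 0 := le_antisymm (by have := dist_le_rr (F := F) x y; linarith [h'.1]) dist_nonneg
        rw [Option.some_inj]
        exact eq_of_dist_eq_zero this
      · linarith [h'.1]
    · linarith

theorem DD_triangle (hF : ∀ x, 0 ≤ F x) (p q r : Option X) :
    DD F p r ≤ DD F p q + DD F q r := by
  have hlipL : ∀ a b : X, gg F a - gg F b ≤ DD F (some a) (some b) := fun a b =>
    (le_abs_self _).trans (DD_lip hF a b)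
  have hlipR : ∀ a b : X, gg F b - gg F a ≤ DD F (some a) (some b) := fun a b => by
    have h1 := DD_lip hF a b
    have h2 : gg F b - gg F a ≤ |gg F a - gg F b| := by
      rw [abs_sub_comm]; exact le_abs_self _
    linarith
  have hle := DD_le_add hF
  have hg := fun x => gg_pos hF x
  cases p with
  | none => cases q with
    | none => cases r with
      | none => simp
      | some c => simp
    | some b => cases r with
      | none => simp [(hg b).le]
      | some c =>
        simp only [DD_none_some]
        have := hlipR b c
        linarith
  | some a => cases q with
    | none => cases r with
      | none => simp [(hg a).le]
      | some c => simpa using hle a c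
    | some b => cases r with
      | none =>
        simp only [DD_some_none]
        have := hlipL a b
        linarith
      | some c =>
        have htri := rr_triangle (F := F) a b c
        have hlr1 := gg_lip_rr hF a b
        have hlr2 := gg_lip_rr hF b c
        have habs1 : gg F a - gg F b ≤ rr F a b := (le_abs_self _).trans hlr1
        have habs1' : gg F b - gg F a ≤ rr F a b := by
          have : gg F b - gg F a ≤ |gg F a - gg F b| := by
            rw [abs_sub_comm]; exact le_abs_self _
          linarith
        have habs2 : gg F b - gg F c ≤ rr F b c := (le_abs_self _).trans hlr2
        have habs2' : gg F c - gg F b ≤ rr F b c := by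
          have : gg F c - gg F b ≤ |gg F b - gg F c| := by
            rw [abs_sub_comm]; exact le_abs_self _
          linarith
        have hga := hg a; have hgb := hg b; have hgc := hg c
        by_cases hac : connectedComponent a = connectedComponent c
        · by_cases hab : connectedComponent a = connectedComponent b
          · have hbc : connectedComponent b = connectedComponent c := hab.symm.trans hac
            rw [DD_some_some, DD_some_some, DD_some_some, if_pos hab, if_pos hbc, if_pos hac]
            rcases min_cases (rr F a b) (gg F a + gg F b) with ⟨h1, -⟩ | ⟨h1, -⟩ <;>
              rcases min_cases (rr F b c) (gg F b + gg F c) with ⟨h2, -⟩ | ⟨h2, -⟩ <;>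
              rw [h1, h2]
            · exact (min_le_left _ _).trans (by linarith)
            · exact (min_le_right _ _).trans (by linarith)
            · exact (min_le_right _ _).trans (by linarith)
            · exact (min_le_right _ _).trans (by linarith)
          · have hbc : connectedComponent b ≠ connectedComponent c :=
              fun h => hab (hac.trans h.symm)
            rw [DD_some_some, DD_some_some, DD_some_some, if_pos hac, if_neg hab, if_neg hbc]
            exact (min_le_right _ _).trans (by linarith)
        · by_cases hab : connectedComponent a = connectedComponent b
          · have hbc : connectedComponent b ≠ connectedComponent c :=
              fun h => hac (hab.trans h)
            rw [DD_some_some, DD_some_some, DD_some_some, if_neg hac, if_pos hab, if_neg hbc]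
            have : gg F a - gg F b ≤ min (rr F a b) (gg F a + gg F b) :=
              le_min habs1 (by linarith)
            linarith [le_min habs1 (show gg F a - gg F b ≤ gg F a + gg F b by linarith)]
          · by_cases hbc : connectedComponent b = connectedComponent c
            · rw [DD_some_some, DD_some_some, DD_some_some, if_neg hac, if_neg hab, if_pos hbc]
              linarith [le_min habs2' (show gg F c - gg F b ≤ gg F b + gg F c by linarith)]
            · rw [DD_some_some, DD_some_some, DD_some_some, if_neg hac, if_neg hab, if_neg hbc]
              linarith

/-- The metric space structure on the one-point connectification. -/
noncomputable def advmMetric (F : X → ℝ) (hF : ∀ x, 0 ≤ F x) : MetricSpace (Option X) where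
  dist := DD F
  dist_self := DD_self hF
  dist_comm := DD_comm
  dist_triangle := DD_triangle hF
  eq_of_dist_eq_zero := DD_eq_zero hF

end ADvM

section Main

variable {X : Type u}

/-- (Abry–Dijkstra–van Mill) A nonempty separable metrizable space in which
every connected component is open has a separable metrizable one-point
connectification if and only if it has no compact connected component. -/
theorem abry_dijkstra_vanMill_one_point_connectification
    (X : Type u) [TopologicalSpace X] [Nonempty X]
    [TopologicalSpace.MetrizableSpace X] [TopologicalSpace.SeparableSpace X]
    (hopen : ∀ x : X, IsOpen (connectedComponent x)) :
    (∃ (Y : Type u) (_ : TopologicalSpace Y), ConnectedSpace Y ∧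
      TopologicalSpace.MetrizableSpace Y ∧ TopologicalSpace.SeparableSpace Y ∧
      ∃ e : X → Y, IsDenseEmbedding e ∧ ∃ p : Y, (Set.range e)ᶜ = {p}) ↔
    (∀ x : X, ¬ IsCompact (connectedComponent x)) := by
  constructor
  · rintro ⟨Y, tY, hconn, hmet, hsep, e, hde, p, hp⟩ x hcx
    haveI := hmet
    have hpmem : p ∉ Set.range e := by
      have h : p ∈ ({p} : Set Y) := rfl
      rw [← hp] at h
      exact h
    have hrange : Set.range e = ({p} : Set Y)ᶜ := by
      rw [← compl_compl (Set.range e), hp]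
    have hopenrange : IsOpen (Set.range e) := by
      rw [hrange]; exact isClosed_singleton.isOpen_compl
    have hemb : IsEmbedding e := ⟨hde.toIsDenseInducing.toIsInducing, hde.injective⟩
    have hoe : IsOpenEmbedding e := ⟨hemb, hopenrange⟩
    have himg_open : IsOpen (e '' connectedComponent x) := hoe.isOpenMap _ (hopen x)
    have himg_cpt : IsCompact (e '' connectedComponent x) :=
      hcx.image hde.toIsDenseInducing.continuous
    have huniv : e '' connectedComponent x = Set.univ :=
      IsClopen.eq_univ ⟨himg_cpt.isClosed, himg_open⟩
        ⟨e x, ⟨x, mem_connectedComponent, rfl⟩⟩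
    have hpimg : p ∈ e '' connectedComponent x := huniv ▸ Set.mem_univ p
    obtain ⟨z, -, rfl⟩ := hpimg
    exact hpmem ⟨z, rfl⟩
  · intro hnc
    classical
    letI m : MetricSpace X := TopologicalSpace.metrizableSpaceMetric X
    have hcomp : ∀ s : Set X, (∃ x : X, s = connectedComponent x) →
        ∃ F : X → ℝ, ContinuousOn F s ∧ (∀ y, 0 ≤ F y) ∧ ∀ r : ℝ, ∃ y ∈ s, r < F y := by
      rintro s ⟨x, rfl⟩
      have hnco : ¬ CompactSpace (connectedComponent x) := by
        rw [← isCompact_iff_compactSpace]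
        exact hnc x
      obtain ⟨f, hfc, hf⟩ := advm_exists_unbounded _ hnco
      refine ⟨fun y => if h : y ∈ connectedComponent x then |f ⟨y, h⟩| else 0, ?_, ?_, ?_⟩
      · rw [continuousOn_iff_continuous_restrict]
        have hres : (connectedComponent x).domRestrict
            (fun y => if h : y ∈ connectedComponent x then |f ⟨y, h⟩| else 0) =
            fun z => |f z| := by
          funext z
          simp only [Set.domRestrict_apply]
          rw [dif_pos z.2]
        rw [hres]
        exact hfc.abs
      · intro y
        dsimp only
        split_ifs with h
        · exact abs_nonneg _
        · exact le_rfl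
      · intro r
        obtain ⟨z, hz⟩ := hf r
        refine ⟨z, z.2, ?_⟩
        dsimp only
        rw [dif_pos z.2]
        exact hz.trans_le (le_abs_self _)
    have hex : ∀ s : Set X, ∃ F : X → ℝ, (∃ x : X, s = connectedComponent x) →
        ContinuousOn F s ∧ (∀ y, 0 ≤ F y) ∧ ∀ r : ℝ, ∃ y ∈ s, r < F y := by
      intro s
      by_cases h : ∃ x : X, s = connectedComponent x
      · obtain ⟨F, hF⟩ := hcomp s h
        exact ⟨F, fun _ => hF⟩
      · exact ⟨fun _ => 0, fun h' => absurd h' h⟩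
    choose Φ hΦ using hex
    set F : X → ℝ := fun y => Φ (connectedComponent y) y with hFdef
    have hF0 : ∀ y, 0 ≤ F y := fun y => (hΦ _ ⟨y, rfl⟩).2.1 _
    have hFcc : ∀ x : X, ∀ y ∈ connectedComponent x, F y = Φ (connectedComponent x) y := by
      intro x y hy
      have h := connectedComponent_eq hy
      simp only [hFdef, h]
    have hFunbdd : ∀ (x : X) (r : ℝ), ∃ y ∈ connectedComponent x, r < F y := by
      intro x r
      obtain ⟨y, hy, hr⟩ := (hΦ _ ⟨x, rfl⟩).2.2 r
      exact ⟨y, hy, by rw [hFcc x y hy]; exact hr⟩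
    have hFc : Continuous F := by
      rw [continuous_iff_continuousAt]
      intro x
      have hmem : connectedComponent x ∈ 𝓝 x := (hopen x).mem_nhds mem_connectedComponent
      have h1 : ContinuousAt (Φ (connectedComponent x)) x :=
        ((hΦ _ ⟨x, rfl⟩).1).continuousAt hmem
      exact h1.congr (Filter.eventuallyEq_of_mem hmem fun y hy => (hFcc x y hy).symm)
    have hgsmall : ∀ (x : X) (ε : ℝ), 0 < ε → ∃ y ∈ connectedComponent x, ADvM.gg F y < ε := by
      intro x ε hε
      obtain ⟨y, hy, hr⟩ := hFunbdd x (1 / ε)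
      refine ⟨y, hy, ?_⟩
      have h1 : 1 / ε < 1 + F y := by linarith
      have h2 : (0:ℝ) < 1 / ε := by positivity
      have h3 := one_div_lt_one_div_of_lt h2 h1
      rw [one_div_one_div] at h3
      have h4 : ADvM.gg F y = 1 / (1 + F y) := rfl
      rw [h4]
      exact h3
    letI MY : MetricSpace (Option X) := ADvM.advmMetric F hF0
    have hdist : ∀ p q : Option X, dist p q = ADvM.DD F p q := fun p q => rfl
    have hInd : IsInducing (some : X → Option X) := by
      rw [isInducing_iff_nhds]
      intro a
      apply le_antisymm
      · intro V hV
        rw [Filter.mem_comap] at hV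
        obtain ⟨W, hW, hWsub⟩ := hV
        obtain ⟨ε, hε, hball⟩ := Metric.mem_nhds_iff.mp hW
        have hop : IsOpen {y : X | |F a - F y| < ε/2} :=
          isOpen_lt (continuous_const.sub hFc).abs continuous_const
        have hnbhd : connectedComponent a ∩ Metric.ball a (ε/2) ∩
            {y : X | |F a - F y| < ε/2} ∈ 𝓝 a := by
          refine Filter.inter_mem (Filter.inter_mem
            ((hopen a).mem_nhds mem_connectedComponent)
            (Metric.ball_mem_nhds a (by positivity))) ?_
          refine hop.mem_nhds ?_
          simp only [Set.mem_setOf_eq, sub_self, abs_zero]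
          positivity
        refine Filter.mem_of_superset hnbhd ?_
        rintro y ⟨⟨hy1, hy2⟩, hy3⟩
        apply hWsub
        apply hball
        rw [Metric.mem_ball, hdist]
        have hcc : connectedComponent y = connectedComponent a := (connectedComponent_eq hy1).symm
        rw [ADvM.DD_some_some, if_pos hcc]
        refine lt_of_le_of_lt (min_le_left _ _) ?_
        have hrr : ADvM.rr F y a = dist y a + |F y - F a| := rfl
        rw [Metric.mem_ball] at hy2
        simp only [Set.mem_setOf_eq] at hy3
        rw [abs_sub_comm] at hy3
        rw [hrr]
        linarith
      · intro U hU
        obtain ⟨ε, hε, hball⟩ := Metric.mem_nhds_iff.mp hU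
        rw [Filter.mem_comap]
        refine ⟨Metric.ball (some a) (min ε (ADvM.gg F a)),
          Metric.ball_mem_nhds _ (lt_min hε (ADvM.gg_pos hF0 a)), ?_⟩
        intro y hy
        rw [Set.mem_preimage, Metric.mem_ball, hdist] at hy
        apply hball
        rw [Metric.mem_ball]
        have hminr := min_le_right ε (ADvM.gg F a)
        have hminl := min_le_left ε (ADvM.gg F a)
        have hgy := ADvM.gg_pos hF0 y
        by_cases hcc : connectedComponent y = connectedComponent a
        · rw [ADvM.DD_some_some, if_pos hcc] at hy
          rcases min_cases (ADvM.rr F y a) (ADvM.gg F y + ADvM.gg F a) with ⟨h1, -⟩ | ⟨h1, -⟩ <;>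
            rw [h1] at hy
          · have := ADvM.dist_le_rr (F := F) y a
            linarith
          · linarith
        · rw [ADvM.DD_some_some, if_neg hcc] at hy
          linarith
    have hdr : DenseRange (some : X → Option X) := by
      have : ∀ z : Option X, z ∈ closure (Set.range (some : X → Option X)) := by
        intro z
        cases z with
        | some x => exact subset_closure ⟨x, rfl⟩
        | none =>
          rw [Metric.mem_closure_iff]
          intro ε hε
          obtain ⟨y, -, hy⟩ := hgsmall (Classical.arbitrary X) ε hε
          exact ⟨some y, ⟨y, rfl⟩, by rw [hdist]; exact hy⟩
      exact this
    have hpc : ∀ x : X,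
        IsPreconnected (insert none ((some : X → Option X) '' connectedComponent x)) := by
      intro x
      have h1 : IsPreconnected ((some : X → Option X) '' connectedComponent x) :=
        isPreconnected_connectedComponent.image _ hInd.continuous.continuousOn
      refine h1.subset_closure (Set.subset_insert _ _) ?_
      rw [Set.insert_subset_iff]
      refine ⟨?_, subset_closure⟩
      rw [Metric.mem_closure_iff]
      intro ε hε
      obtain ⟨y, hy, hgy⟩ := hgsmall x ε hε
      exact ⟨some y, ⟨y, hy, rfl⟩, by rw [hdist]; exact hgy⟩
    haveI hcs : ConnectedSpace (Option X) := by
      rw [connectedSpace_iff_univ]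
      refine ⟨⟨none, Set.mem_univ _⟩, ?_⟩
      have huniv : (Set.univ : Set (Option X)) =
          ⋃₀ {S | ∃ x : X, S = insert none ((some : X → Option X) '' connectedComponent x)} := by
        apply Set.eq_of_subset_of_subset
        · rintro z -
          cases z with
          | none => exact ⟨_, ⟨Classical.arbitrary X, rfl⟩, Set.mem_insert _ _⟩
          | some x =>
            exact ⟨_, ⟨x, rfl⟩, Set.mem_insert_of_mem _ ⟨x, mem_connectedComponent, rfl⟩⟩
        · exact fun _ _ => Set.mem_univ _
      rw [huniv]
      apply isPreconnected_sUnion none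
      · rintro S ⟨x, rfl⟩; exact Set.mem_insert _ _
      · rintro S ⟨x, rfl⟩; exact hpc x
    haveI hsep2 : TopologicalSpace.SeparableSpace (Option X) :=
      hdr.separableSpace hInd.continuous
    refine ⟨Option X, inferInstance, hcs, inferInstance, hsep2, some,
      ⟨⟨hInd, hdr⟩, Option.some_injective X⟩, none, ?_⟩
    ext z
    cases z <;> simp

end Main
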